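/- arXiv:nlin/0609034 — 8 statements merged into one kernel-verified Lean document; each statement's English description precedes it below -/
import Mathlib

section
/- Let w₁ᵉ, ..., wₙᵉ be real-valued functions of ε on an interval (0, β) such that each limit Mᵢ = lim_{ε→0⁺} wᵢᵉ exists and is finite. Suppose the maximum 𝔐 = max(M₁, ..., Mₙ) is attained at a unique index i₀. Then for any nonzero real constants γ₁, ..., γₙ with γ_{i₀} > 0, the limit as ε → 0⁺ of ε·ln(∑ᵢ γᵢ e^(wᵢᵉ/ε)) equals 𝔐. -/
/-! Factoring out the dominant exponential, `∑ i, γ i * exp (w i ε / ε) = exp (w i₀ ε / ε) * S ε`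
where `S ε = ∑ i, γ i * exp ((w i ε - w i₀ ε) / ε)`. Every term of `S` with `i ≠ i₀` has exponent
tending to `-∞`, so `S ε → γ i₀ > 0`; hence `ε * log` of the sum is `w i₀ ε + ε * log (S ε) → M i₀`. -/

open Filter Real Finset Topology

theorem tendsto_exp_div_nhdsGT_zero_of_neg {f : ℝ → ℝ} {c : ℝ}
    (hf : Tendsto f (𝓝[>] 0) (𝓝 c)) (hc : c < 0) :
    Tendsto (fun ε => exp (f ε / ε)) (𝓝[>] 0) (𝓝 0) := by
  simp_rw [tendsto_exp_comp_nhds_zero, div_eq_mul_inv]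
  exact hf.neg_mul_atTop hc tendsto_inv_nhdsGT_zero

theorem sum_mul_exp_div_eq_exp_div_mul {ι : Type*} (s : Finset ι) (γ : ι → ℝ) (a : ι → ℝ)
    (b ε : ℝ) :
    ∑ i ∈ s, γ i * exp (a i / ε) = exp (b / ε) * ∑ i ∈ s, γ i * exp ((a i - b) / ε) := by
  rw [mul_sum]
  refine sum_congr rfl fun i _ => ?_
  rw [mul_left_comm, ← exp_add, sub_div, add_sub_cancel]

theorem tendsto_sum_mul_exp_sub_div_of_unique_max {ι : Type*} [Fintype ι] [DecidableEq ι]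
    {w : ι → ℝ → ℝ} {M : ι → ℝ} (hM : ∀ i, Tendsto (w i) (𝓝[>] 0) (𝓝 (M i)))
    {i₀ : ι} (hmax : ∀ i, i ≠ i₀ → M i < M i₀) (γ : ι → ℝ) :
    Tendsto (fun ε => ∑ i, γ i * exp ((w i ε - w i₀ ε) / ε)) (𝓝[>] 0) (𝓝 (γ i₀)) := by
  have hterm : ∀ i, Tendsto (fun ε => γ i * exp ((w i ε - w i₀ ε) / ε)) (𝓝[>] 0)
      (𝓝 (if i = i₀ then γ i₀ else 0)) := by
    intro i
    split_ifs with hi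
    · subst hi
      simp only [sub_self, zero_div, exp_zero, mul_one, tendsto_const_nhds]
    · simpa using (tendsto_exp_div_nhdsGT_zero_of_neg ((hM i).sub (hM i₀))
        (sub_neg.mpr (hmax i hi))).const_mul (γ i)
  simpa using tendsto_finsetSum univ fun i _ => hterm i

theorem tendsto_mul_log_exp_div_mul {u S : ℝ → ℝ} {m s : ℝ}
    (hu : Tendsto u (𝓝[>] 0) (𝓝 m)) (hS : Tendsto S (𝓝[>] 0) (𝓝 s)) (hs : 0 < s) :
    Tendsto (fun ε => ε * log (exp (u ε / ε) * S ε)) (𝓝[>] 0) (𝓝 m) := by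
  have hlog : Tendsto (fun ε => u ε + ε * log (S ε)) (𝓝[>] 0) (𝓝 (m + 0 * log s)) :=
    hu.add (tendsto_nhdsWithin_of_tendsto_nhds tendsto_id |>.mul (hS.log hs.ne'))
  rw [zero_mul, add_zero] at hlog
  refine hlog.congr' ?_
  filter_upwards [self_mem_nhdsWithin, hS.eventually (lt_mem_nhds hs)] with ε hε hSε
  rw [log_mul (exp_pos _).ne' hSε.ne', log_exp, mul_add, mul_div_cancel₀ _ (ne_of_gt hε)]

theorem stmt_2_general (n : ℕ) (w : Fin (n + 1) → ℝ → ℝ) (M : Fin (n + 1) → ℝ)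
    (hM : ∀ i, Tendsto (w i) (nhdsWithin 0 (Set.Ioi 0)) (nhds (M i)))
    (i₀ : Fin (n + 1)) (hmax : ∀ i, i ≠ i₀ → M i < M i₀)
    (γ : Fin (n + 1) → ℝ) (hγ₀ : 0 < γ i₀) :
    ∃ β' > (0 : ℝ),
      (∀ ε ∈ Set.Ioo (0 : ℝ) β', 0 < ∑ i, γ i * Real.exp (w i ε / ε)) ∧
      Tendsto (fun ε : ℝ => ε * Real.log (∑ i, γ i * Real.exp (w i ε / ε)))
        (nhdsWithin 0 (Set.Ioi 0)) (nhds (M i₀)) := by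
  have hS := tendsto_sum_mul_exp_sub_div_of_unique_max hM hmax γ
  have hfactor : ∀ ε, ∑ i, γ i * exp (w i ε / ε) =
      exp (w i₀ ε / ε) * ∑ i, γ i * exp ((w i ε - w i₀ ε) / ε) := fun ε =>
    sum_mul_exp_div_eq_exp_div_mul univ γ (fun i => w i ε) (w i₀ ε) ε
  simp_rw [hfactor]
  obtain ⟨β', hβ', hSpos⟩ :=
    mem_nhdsGT_iff_exists_Ioo_subset.mp (hS.eventually (lt_mem_nhds hγ₀))
  exact ⟨β', hβ', fun ε hε => mul_pos (exp_pos _) (hSpos hε),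
    tendsto_mul_log_exp_div_mul (hM i₀) hS hγ₀⟩

theorem stmt_2 (n : ℕ) (w : Fin (n + 1) → ℝ → ℝ) (M : Fin (n + 1) → ℝ)
    (hM : ∀ i, Tendsto (w i) (nhdsWithin 0 (Set.Ioi 0)) (nhds (M i)))
    (i₀ : Fin (n + 1)) (hmax : ∀ i, i ≠ i₀ → M i < M i₀)
    (γ : Fin (n + 1) → ℝ) (hγ : ∀ i, γ i ≠ 0) (hγ₀ : 0 < γ i₀) :
    ∃ β' > (0 : ℝ),
      (∀ ε ∈ Set.Ioo (0 : ℝ) β', 0 < ∑ i, γ i * Real.exp (w i ε / ε)) ∧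
      Tendsto (fun ε : ℝ => ε * Real.log (∑ i, γ i * Real.exp (w i ε / ε)))
        (nhdsWithin 0 (Set.Ioi 0)) (nhds (M i₀)) :=
  stmt_2_general n w M hM i₀ hmax γ hγ₀
end

section
/- Under the hypotheses of the general ultra-discrete limit theorem (finite limits Mᵢ of wᵢᵉ, with either a unique maximizing index or D = ∑_{i∈ℑ} γᵢ e^{μᵢ} ≠ 0), one has lim_{ε→0⁺} e^{−𝔐/ε}·τ(ε) = D, where τ(ε) = ∑ᵢ γᵢ e^(wᵢᵉ/ε), 𝔐 = max Mᵢ, ℑ = {i : Mᵢ = 𝔐}, and μᵢ = lim_{ε→0⁺}(wᵢᵉ − 𝔐)/ε for i ∈ ℑ. -/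
open Filter Real Finset

theorem stmt_4 (n : ℕ) (w : Fin (n + 1) → ℝ → ℝ) (M : Fin (n + 1) → ℝ)
    (hM : ∀ i, Tendsto (w i) (nhdsWithin 0 (Set.Ioi 0)) (nhds (M i)))
    (γ : Fin (n + 1) → ℝ) (hγ : ∀ i, γ i ≠ 0)
    (𝔐 : ℝ) (h𝔐 : 𝔐 = Finset.univ.sup' Finset.univ_nonempty M)
    (μ : Fin (n + 1) → ℝ)
    (hμ : ∀ i, M i = 𝔐 →
      Tendsto (fun ε : ℝ => (w i ε - 𝔐) / ε) (nhdsWithin 0 (Set.Ioi 0)) (nhds (μ i)))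
    (hcond : (∃! i, M i = 𝔐) ∨
      ∑ i ∈ Finset.univ.filter (fun i => M i = 𝔐), γ i * Real.exp (μ i) ≠ 0) :
    Tendsto (fun ε : ℝ => Real.exp (-𝔐 / ε) * ∑ i, γ i * Real.exp (w i ε / ε))
      (nhdsWithin 0 (Set.Ioi 0))
      (nhds (∑ i ∈ Finset.univ.filter (fun i => M i = 𝔐), γ i * Real.exp (μ i))) := by
  have key : Tendsto (fun ε : ℝ => ∑ i, γ i * Real.exp ((w i ε - 𝔐) / ε))
      (nhdsWithin 0 (Set.Ioi 0))
      (nhds (∑ i, if M i = 𝔐 then γ i * Real.exp (μ i) else 0)) := by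
    apply tendsto_finset_sum
    intro i _
    by_cases hi : M i = 𝔐
    · simp only [hi, if_true]
      exact ((Real.continuous_exp.tendsto _).comp (hμ i hi)).const_mul _
    · simp only [hi, if_false]
      have hlt : M i - 𝔐 < 0 := by
        have hle : M i ≤ 𝔐 := h𝔐 ▸ Finset.le_sup' M (Finset.mem_univ i)
        have : M i ≠ 𝔐 := hi
        linarith [lt_of_le_of_ne hle this]
      have h1 : Tendsto (fun ε : ℝ => w i ε - 𝔐) (nhdsWithin 0 (Set.Ioi 0))
          (nhds (M i - 𝔐)) := (hM i).sub_const _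
      have h2 : Tendsto (fun ε : ℝ => (1 : ℝ) / ε) (nhdsWithin 0 (Set.Ioi 0)) atTop := by
        simpa using tendsto_inv_nhdsGT_zero
      have h3 : Tendsto (fun ε : ℝ => (w i ε - 𝔐) / ε) (nhdsWithin 0 (Set.Ioi 0)) atBot := by
        have := h1.neg_mul_atTop hlt h2
        simpa [div_eq_mul_inv, mul_comm] using this
      have h4 : Tendsto (fun ε : ℝ => γ i * Real.exp ((w i ε - 𝔐) / ε))
          (nhdsWithin 0 (Set.Ioi 0)) (nhds (γ i * 0)) :=
        (Real.tendsto_exp_atBot.comp h3).const_mul _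
      simpa using h4
  have hsum : (∑ i ∈ Finset.univ.filter (fun i => M i = 𝔐), γ i * Real.exp (μ i))
      = ∑ i, if M i = 𝔐 then γ i * Real.exp (μ i) else 0 := by
    rw [Finset.sum_filter]
  rw [hsum]
  apply key.congr'
  filter_upwards [self_mem_nhdsWithin] with ε (hε : ε ∈ Set.Ioi 0)
  have hε' : ε ≠ 0 := ne_of_gt hε
  rw [Finset.mul_sum]
  refine Finset.sum_congr rfl fun i _ => ?_
  rw [show (w i ε - 𝔐) / ε = -𝔐 / ε + w i ε / ε by ring, Real.exp_add]
  ring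
end

section
/- Let a, k ∈ ℝ with k > 0. Define u₁ᵉ = a + 2ε·ln(e^(−k/ε) + √(8 + e^(−2k/ε))), u₂ᵉ = a + ε·ln 2, and τ(ε) = e^(u₁ᵉ/ε) − 4·e^(u₂ᵉ/ε). Then lim_{ε→0⁺} ε·ln|τ(ε)| = a − k, even though lim_{ε→0⁺} u₁ᵉ = lim_{ε→0⁺} u₂ᵉ = a. -/
open Filter Real

theorem stmt_5 (a k : ℝ) (hk : 0 < k) :
    let u₁ : ℝ → ℝ := fun ε => a + 2 * ε * Real.log (Real.exp (-k / ε) + Real.sqrt (8 + Real.exp (-2 * k / ε)))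
    let u₂ : ℝ → ℝ := fun ε => a + ε * Real.log 2
    let τ : ℝ → ℝ := fun ε => Real.exp (u₁ ε / ε) - 4 * Real.exp (u₂ ε / ε)
    Tendsto (fun ε => ε * Real.log |τ ε|) (nhdsWithin 0 (Set.Ioi 0)) (nhds (a - k)) ∧
    Tendsto u₁ (nhdsWithin 0 (Set.Ioi 0)) (nhds a) ∧
    Tendsto u₂ (nhdsWithin 0 (Set.Ioi 0)) (nhds a) := by
  intro u₁ u₂ τ
  set g : ℝ → ℝ := fun ε => Real.exp (-k / ε) + Real.sqrt (8 + Real.exp (-2 * k / ε)) with hg_def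
  have hεlim : Tendsto (fun ε : ℝ => ε) (nhdsWithin 0 (Set.Ioi 0)) (nhds 0) :=
    tendsto_id.mono_left nhdsWithin_le_nhds
  have hexp : ∀ c : ℝ, 0 < c → Tendsto (fun ε : ℝ => Real.exp (-c / ε)) (nhdsWithin 0 (Set.Ioi 0)) (nhds 0) := by
    intro c hc
    apply Real.tendsto_exp_atBot.comp
    have h1 : Tendsto (fun ε : ℝ => c / ε) (nhdsWithin 0 (Set.Ioi 0)) atTop := by
      simpa [div_eq_mul_inv] using tendsto_inv_nhdsGT_zero.const_mul_atTop hc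
    have h2 := tendsto_neg_atTop_atBot.comp h1
    refine h2.congr fun ε => ?_
    simp [neg_div]
  have hx1 := hexp k hk
  have hx2 : Tendsto (fun ε : ℝ => Real.exp (-2 * k / ε)) (nhdsWithin 0 (Set.Ioi 0)) (nhds 0) := by
    have := hexp (2 * k) (by linarith)
    simpa [neg_mul] using this
  have hgpos : ∀ ε : ℝ, 0 < g ε := by
    intro ε
    have h1 : 0 < Real.exp (-k / ε) := Real.exp_pos _
    have h2 : 0 ≤ Real.sqrt (8 + Real.exp (-2 * k / ε)) := Real.sqrt_nonneg _
    simp only [hg_def]; linarith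
  have hglim : Tendsto g (nhdsWithin 0 (Set.Ioi 0)) (nhds (Real.sqrt 8)) := by
    have hsqrt : Tendsto (fun ε : ℝ => Real.sqrt (8 + Real.exp (-2 * k / ε)))
        (nhdsWithin 0 (Set.Ioi 0)) (nhds (Real.sqrt 8)) := by
      have hadd : Tendsto (fun ε : ℝ => 8 + Real.exp (-2 * k / ε)) (nhdsWithin 0 (Set.Ioi 0))
          (nhds 8) := by simpa using tendsto_const_nhds.add hx2
      exact (Real.continuous_sqrt.tendsto (8 : ℝ)).comp hadd
    simpa [hg_def] using hx1.add hsqrt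
  have hloglim : Tendsto (fun ε => Real.log (g ε)) (nhdsWithin 0 (Set.Ioi 0))
      (nhds (Real.log (Real.sqrt 8))) := by
    have h8 : (0:ℝ) < Real.sqrt 8 := Real.sqrt_pos.mpr (by norm_num)
    exact ((Real.continuousAt_log h8.ne').tendsto).comp hglim
  -- key identity
  have hτ : ∀ ε : ℝ, 0 < ε → τ ε = 2 * Real.exp ((a - k) / ε) * g ε := by
    intro ε hε
    have hεne : ε ≠ 0 := hε.ne'
    have hgε := hgpos ε
    have hu1 : (u₁ ε) / ε = a / ε + 2 * Real.log (g ε) := by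
      simp only [u₁, hg_def]
      field_simp
    have hu2 : (u₂ ε) / ε = a / ε + Real.log 2 := by
      simp only [u₂]
      field_simp
    have he1 : Real.exp (u₁ ε / ε) = Real.exp (a / ε) * (g ε) ^ 2 := by
      rw [hu1, Real.exp_add, two_mul, Real.exp_add, Real.exp_log hgε]; ring
    have he2 : Real.exp (u₂ ε / ε) = Real.exp (a / ε) * 2 := by
      rw [hu2, Real.exp_add, Real.exp_log (by norm_num)]
    have hsq : (g ε) ^ 2 - 8 = 2 * Real.exp (-k / ε) * g ε := by
      have hx2eq : Real.exp (-2 * k / ε) = Real.exp (-k / ε) ^ 2 := by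
        rw [← Real.exp_nat_mul]
        ring_nf
      have hs : Real.sqrt (8 + Real.exp (-2 * k / ε)) ^ 2 = 8 + Real.exp (-2 * k / ε) :=
        Real.sq_sqrt (by positivity)
      simp only [hg_def]
      nlinarith [hs, hx2eq]
    have hexpk : Real.exp (a / ε) * Real.exp (-k / ε) = Real.exp ((a - k) / ε) := by
      rw [← Real.exp_add]
      congr 1
      field_simp
      ring
    simp only [τ, he1, he2]
    rw [show Real.exp (a/ε) * g ε ^ 2 - 4 * (Real.exp (a/ε) * 2)
        = Real.exp (a/ε) * (g ε ^ 2 - 8) by ring, hsq, ← hexpk]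
    ring
  -- first limit
  have h1 : Tendsto (fun ε => ε * Real.log |τ ε|) (nhdsWithin 0 (Set.Ioi 0)) (nhds (a - k)) := by
    have heq : ∀ ε ∈ Set.Ioi (0:ℝ),
        ε * Real.log |τ ε| = (a - k) + (ε * Real.log 2 + ε * Real.log (g ε)) := by
      intro ε hε
      have hε' : (0:ℝ) < ε := hε
      have hτpos : 0 < τ ε := by
        rw [hτ ε hε']; positivity
      rw [abs_of_pos hτpos, hτ ε hε']
      rw [Real.log_mul (by positivity) (hgpos ε).ne', Real.log_mul (by norm_num) (Real.exp_ne_zero _),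
        Real.log_exp]
      field_simp
      ring
    have hlim : Tendsto (fun ε => (a - k) + (ε * Real.log 2 + ε * Real.log (g ε)))
        (nhdsWithin 0 (Set.Ioi 0)) (nhds (a - k)) := by
      have h2 : Tendsto (fun ε : ℝ => ε * Real.log 2 + ε * Real.log (g ε))
          (nhdsWithin 0 (Set.Ioi 0)) (nhds (0 * Real.log 2 + 0 * Real.log (Real.sqrt 8))) :=
        (hεlim.mul tendsto_const_nhds).add (hεlim.mul hloglim)
      simpa using (tendsto_const_nhds (x := a - k)).add h2
    exact hlim.congr' (eventually_nhdsWithin_of_forall fun ε hε => (heq ε hε).symm)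
  refine ⟨h1, ?_, ?_⟩
  · have : Tendsto (fun ε => a + 2 * ε * Real.log (g ε)) (nhdsWithin 0 (Set.Ioi 0)) (nhds a) := by
      have h2 : Tendsto (fun ε : ℝ => 2 * ε * Real.log (g ε)) (nhdsWithin 0 (Set.Ioi 0))
          (nhds (2 * 0 * Real.log (Real.sqrt 8))) :=
        ((tendsto_const_nhds (x := (2:ℝ))).mul hεlim).mul hloglim
      simpa using (tendsto_const_nhds (x := a)).add h2
    exact this
  · have h2 : Tendsto (fun ε : ℝ => ε * Real.log 2) (nhdsWithin 0 (Set.Ioi 0))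
        (nhds (0 * Real.log 2)) := hεlim.mul tendsto_const_nhds
    simpa using (tendsto_const_nhds (x := a)).add h2
end

section
/- Let a, k ∈ ℝ with k > 0 and γ ∈ ℝ with γ ≠ −4 and γ ≠ 0. Define u₁ᵉ = a + 2ε·ln(e^(−k/ε) + √(8 + e^(−2k/ε))), u₂ᵉ = a + ε·ln 2, and τ(ε) = e^(u₁ᵉ/ε) + γ·e^(u₂ᵉ/ε). Then lim_{ε→0⁺} ε·ln|τ(ε)| = a. -/
/-!
Factoring `e^{a/ε}` out of both terms gives
`τ(ε) = e^{a/ε} ((e^{-k/ε} + √(8 + e^{-2k/ε}))² + 2γ)`, and the second factor tends to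
`8 + 2γ ≠ 0`. Hence `ε ln |τ(ε)| = a + ε ln |…|` tends to `a`.
-/

open Filter Real Topology

lemma tendsto_exp_neg_div_nhdsGT_zero {c : ℝ} (hc : 0 < c) :
    Tendsto (fun ε => exp (-c / ε)) (𝓝[>] 0) (𝓝 0) := by
  refine tendsto_exp_atBot.comp ?_
  have hdiv : Tendsto (fun ε : ℝ => c / ε) (𝓝[>] 0) atTop :=
    tendsto_inv_nhdsGT_zero.const_mul_atTop hc
  exact (tendsto_neg_atTop_atBot.comp hdiv).congr fun ε => (neg_div ε c).symm

lemma exp_add_mul_div {ε : ℝ} (hε : ε ≠ 0) (a b : ℝ) :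
    exp ((a + ε * b) / ε) = exp (a / ε) * exp b := by
  rw [add_div, mul_div_cancel_left₀ _ hε, exp_add]

lemma tendsto_mul_log_abs_of_eq_exp_div_mul {τ g : ℝ → ℝ} {a L : ℝ}
    (hg : Tendsto g (𝓝[>] 0) (𝓝 L)) (hL : L ≠ 0)
    (hτ : ∀ᶠ ε in 𝓝[>] 0, τ ε = exp (a / ε) * g ε) :
    Tendsto (fun ε => ε * log |τ ε|) (𝓝[>] 0) (𝓝 a) := by
  have hlog : Tendsto (fun ε => log |g ε|) (𝓝[>] 0) (𝓝 (log |L|)) :=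
    (continuousAt_log (abs_ne_zero.mpr hL)).tendsto.comp hg.abs
  have hε : Tendsto (fun ε : ℝ => ε) (𝓝[>] 0) (𝓝 0) := tendsto_nhdsWithin_of_tendsto_nhds tendsto_id
  have hlim : Tendsto (fun ε => a + ε * log |g ε|) (𝓝[>] 0) (𝓝 a) := by
    simpa using (hε.mul hlog).const_add a
  refine hlim.congr' ?_
  filter_upwards [self_mem_nhdsWithin, hτ, hg.eventually_ne hL] with ε (hεpos : 0 < ε) hτε hgε
  rw [hτε, abs_mul, abs_of_pos (exp_pos _), log_mul (exp_ne_zero _) (abs_ne_zero.mpr hgε),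
    log_exp, mul_add, mul_div_cancel₀ _ hεpos.ne']

theorem stmt_6_general (a k γ : ℝ) (hk : 0 < k) (hγ4 : γ ≠ -4) :
    let u₁ : ℝ → ℝ := fun ε => a + 2 * ε * Real.log (Real.exp (-k / ε) + Real.sqrt (8 + Real.exp (-2 * k / ε)))
    let u₂ : ℝ → ℝ := fun ε => a + ε * Real.log 2
    let τ : ℝ → ℝ := fun ε => Real.exp (u₁ ε / ε) + γ * Real.exp (u₂ ε / ε)
    Tendsto (fun ε => ε * Real.log |τ ε|) (nhdsWithin 0 (Set.Ioi 0)) (nhds a) := by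
  intro u₁ u₂ τ
  set w : ℝ → ℝ := fun ε => exp (-k / ε) + √(8 + exp (-2 * k / ε))
  have hw : Tendsto w (𝓝[>] 0) (𝓝 (0 + √(8 + 0))) :=
    (tendsto_exp_neg_div_nhdsGT_zero hk).add
      (((tendsto_exp_neg_div_nhdsGT_zero (by positivity : 0 < 2 * k)).const_add 8).sqrt.congr
        fun ε => by rw [neg_mul])
  have hg : Tendsto (fun ε => w ε ^ 2 + 2 * γ) (𝓝[>] 0) (𝓝 (8 + 2 * γ)) := by
    convert (hw.pow 2).add_const (2 * γ) using 2
    norm_num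
  refine tendsto_mul_log_abs_of_eq_exp_div_mul hg (fun h => hγ4 (by linarith)) ?_
  filter_upwards [self_mem_nhdsWithin] with ε (hε : 0 < ε)
  have hw_pos : 0 < w ε := by positivity
  have hu₁ : exp (u₁ ε / ε) = exp (a / ε) * w ε ^ 2 := by
    rw [show u₁ ε = a + ε * log (w ε ^ 2) by simp only [u₁, log_pow]; push_cast; ring,
      exp_add_mul_div hε.ne', exp_log (by positivity)]
  have hu₂ : exp (u₂ ε / ε) = exp (a / ε) * 2 := by
    rw [exp_add_mul_div hε.ne', exp_log two_pos]
  simp only [τ, hu₁, hu₂]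
  ring

theorem stmt_6 (a k γ : ℝ) (hk : 0 < k) (hγ4 : γ ≠ -4) (hγ0 : γ ≠ 0) :
    let u₁ : ℝ → ℝ := fun ε => a + 2 * ε * Real.log (Real.exp (-k / ε) + Real.sqrt (8 + Real.exp (-2 * k / ε)))
    let u₂ : ℝ → ℝ := fun ε => a + ε * Real.log 2
    let τ : ℝ → ℝ := fun ε => Real.exp (u₁ ε / ε) + γ * Real.exp (u₂ ε / ε)
    Tendsto (fun ε => ε * Real.log |τ ε|) (nhdsWithin 0 (Set.Ioi 0)) (nhds a) :=
  stmt_6_general a k γ hk hγ4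
end

section
/- Define u₁ᵉ = ε·sin(1/ε) and u₂ᵉ = −2 + 3ε, and τ(ε) = e^(u₁ᵉ/ε) − e^(u₂ᵉ/ε). Then τ(ε) > 0 for all sufficiently small ε > 0 and lim_{ε→0⁺} ε·ln τ(ε) = 0, even though lim_{ε→0⁺}(u₁ᵉ − 0)/ε = sin(1/ε) has no limit as ε → 0⁺. -/
/-! Since `u₁ᵉ / ε = sin (1 / ε)` stays in `[-1, 1]` while `u₂ᵉ / ε ≤ -2` for small `ε`, `τ` is
squeezed between the positive constants `e⁻¹ - e⁻²` and `e`, so `log τ` is bounded and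
`ε * log τ → 0`. Along `1 / ε → ∞` a limit of `sin (1 / ε)` would be a limit of the periodic,
nonconstant function `sin` at infinity, which cannot exist. -/

open Filter Real Topology Set

theorem Filter.Tendsto.zero_mul_log_of_eventually_mem_Icc {α : Type*} {l : Filter α}
    {f g : α → ℝ} {a b : ℝ} (hf : Tendsto f l (𝓝 0)) (ha : 0 < a)
    (hg : ∀ᶠ x in l, g x ∈ Icc a b) : Tendsto (fun x => f x * Real.log (g x)) l (𝓝 0) :=
  hf.zero_mul_isBoundedUnder_le <| isBoundedUnder_of_eventually_le (a := max |Real.log a| |Real.log b|) <|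
    hg.mono fun _ hx =>
      abs_le_max_abs_abs (log_le_log ha hx.1) (log_le_log (ha.trans_le hx.1) hx.2)

theorem Function.Periodic.eq_of_tendsto_atTop {α : Type*} [TopologicalSpace α] [T2Space α]
    {f : ℝ → α} {c : ℝ} {L : α} (hf : Function.Periodic f c) (hc : 0 < c)
    (h : Tendsto f atTop (𝓝 L)) (x : ℝ) : f x = L := by
  have hseq : Tendsto (fun n : ℕ => x + n * c) atTop atTop :=
    tendsto_atTop_add_const_left _ _ (tendsto_natCast_atTop_atTop.atTop_mul_const hc)
  exact tendsto_nhds_unique tendsto_const_nhds ((h.comp hseq).congr fun n => hf.nat_mul n x)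

theorem not_exists_tendsto_sin_one_div_nhdsGT_zero :
    ¬ ∃ L : ℝ, Tendsto (fun ε : ℝ => sin (1 / ε)) (𝓝[>] 0) (𝓝 L) := by
  rintro ⟨L, hL⟩
  have hsin : Tendsto sin atTop (𝓝 L) := by
    simpa [Function.comp_def] using hL.comp tendsto_inv_atTop_nhdsGT_zero
  have h₁ := sin_periodic.eq_of_tendsto_atTop two_pi_pos hsin (π / 2)
  have h₀ := sin_periodic.eq_of_tendsto_atTop two_pi_pos hsin 0
  rw [sin_pi_div_two] at h₁
  rw [sin_zero] at h₀
  linarith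

theorem exp_sin_one_div_sub_exp_mem_Icc {ε : ℝ} (hε : ε ∈ Ioo 0 (2 / 5)) :
    exp (ε * sin (1 / ε) / ε) - exp ((-2 + 3 * ε) / ε) ∈ Icc (exp (-1) - exp (-2)) (exp 1) := by
  obtain ⟨hpos, hlt⟩ := hε
  rw [mul_div_cancel_left₀ _ hpos.ne']
  have hsin_lower : exp (-1) ≤ exp (sin (1 / ε)) := exp_le_exp.2 (neg_one_le_sin _)
  have hsin_upper : exp (sin (1 / ε)) ≤ exp 1 := exp_le_exp.2 (sin_le_one _)
  have hsmall : exp ((-2 + 3 * ε) / ε) ≤ exp (-2) :=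
    exp_le_exp.2 (by rw [div_le_iff₀ hpos]; linarith)
  constructor <;> linarith [exp_pos ((-2 + 3 * ε) / ε)]

theorem stmt_7 :
    let u₁ : ℝ → ℝ := fun ε => ε * Real.sin (1 / ε)
    let u₂ : ℝ → ℝ := fun ε => -2 + 3 * ε
    let τ : ℝ → ℝ := fun ε => Real.exp (u₁ ε / ε) - Real.exp (u₂ ε / ε)
    (∃ β' > (0 : ℝ), ∀ ε ∈ Set.Ioo (0 : ℝ) β', 0 < τ ε) ∧
    Tendsto (fun ε => ε * Real.log (τ ε)) (nhdsWithin 0 (Set.Ioi 0)) (nhds 0) ∧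
    ¬ ∃ L : ℝ, Tendsto (fun ε : ℝ => Real.sin (1 / ε)) (nhdsWithin 0 (Set.Ioi 0)) (nhds L) := by
  intro u₁ u₂ τ
  have hτ : ∀ ε ∈ Ioo 0 (2 / 5), τ ε ∈ Icc (exp (-1) - exp (-2)) (exp 1) :=
    fun _ hε => exp_sin_one_div_sub_exp_mem_Icc hε
  have hc : 0 < exp (-1) - exp (-2) := sub_pos.2 (exp_lt_exp.2 (by norm_num))
  refine ⟨⟨2 / 5, by norm_num, fun ε hε => hc.trans_le (hτ ε hε).1⟩, ?_,
    not_exists_tendsto_sin_one_div_nhdsGT_zero⟩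
  exact (tendsto_id.mono_right nhdsWithin_le_nhds).zero_mul_log_of_eventually_mem_Icc hc
    (eventually_of_mem (Ioo_mem_nhdsGT (by norm_num)) hτ)
end

section
/- Let α > 0 be a real parameter. Define f(x₀, x₁) = (α x₁ + 1)/(x₁ x₀) and ι(x₀, x₁) = x₁ + x₀ + α/x₁ + α/x₀ + 1/(x₁ x₀) for nonzero reals x₀, x₁. Then for all x₀, x₁ with x₀ ≠ 0, x₁ ≠ 0, and f(x₀, x₁) ≠ 0: ι(x₁, f(x₀, x₁)) = ι(x₀, x₁). -/
/-! For fixed `y`, clearing denominators in `ι(x, y) = c` gives a quadratic in `x` whose roots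
have product `(α y + 1) / y`. The map sends `(x₀, x₁)` to `(x₁, x₂)` with `x₀ x₂ = (α x₁ + 1) / x₁`,
so `x₀` and `x₂` are the two roots of the same quadratic (a Vieta involution), and `ι` is symmetric. -/

def qrtInvariant {K : Type*} [Field K] (α x y : K) : K :=
  y + x + α / y + α / x + 1 / (y * x)

section

variable {K : Type*} [Field K] {α x x' y : K}

theorem qrtInvariant_comm (α x y : K) : qrtInvariant α x y = qrtInvariant α y x := by
  unfold qrtInvariant
  ring

theorem qrtInvariant_eq_of_mul_mul_eq (hx : x ≠ 0) (hx' : x' ≠ 0) (hy : y ≠ 0)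
    (h : x * x' * y = α * y + 1) : qrtInvariant α x y = qrtInvariant α x' y := by
  unfold qrtInvariant
  field_simp
  linear_combination (x - x') * h

end

theorem stmt_17_general (α : ℝ) :
    let f : ℝ → ℝ → ℝ := fun x₀ x₁ => (α * x₁ + 1) / (x₁ * x₀)
    let ι : ℝ → ℝ → ℝ := fun x₀ x₁ => x₁ + x₀ + α / x₁ + α / x₀ + 1 / (x₁ * x₀)
    ∀ x₀ x₁ : ℝ, x₀ ≠ 0 → x₁ ≠ 0 → f x₀ x₁ ≠ 0 → ι x₁ (f x₀ x₁) = ι x₀ x₁ := by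
  intro f ι x₀ x₁ h₀ h₁ hf
  have hprod : f x₀ x₁ * x₀ * x₁ = α * x₁ + 1 := by
    simp only [f]
    field_simp
  change qrtInvariant α x₁ (f x₀ x₁) = qrtInvariant α x₀ x₁
  rw [qrtInvariant_comm]
  exact qrtInvariant_eq_of_mul_mul_eq hf h₀ h₁ hprod

theorem stmt_17 (α : ℝ) (hα : 0 < α) :
    let f : ℝ → ℝ → ℝ := fun x₀ x₁ => (α * x₁ + 1) / (x₁ * x₀)
    let ι : ℝ → ℝ → ℝ := fun x₀ x₁ => x₁ + x₀ + α / x₁ + α / x₀ + 1 / (x₁ * x₀)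
    ∀ x₀ x₁ : ℝ, x₀ ≠ 0 → x₁ ≠ 0 → f x₀ x₁ ≠ 0 → ι x₁ (f x₀ x₁) = ι x₀ x₁ :=
  stmt_17_general α
end

section
/- Define f(x₀, x₁) = x₁/(1 − x₁²) − x₀ and ι(x₀, x₁) = x₁² + x₀² − x₁²x₀² − x₁x₀. Then for all real x₀, x₁ with x₁² ≠ 1: ι(x₁, f(x₀, x₁)) = ι(x₀, x₁). -/
theorem stmt_18 :
    let f : ℝ → ℝ → ℝ := fun x₀ x₁ => x₁ / (1 - x₁ ^ 2) - x₀
    let ι : ℝ → ℝ → ℝ := fun x₀ x₁ => x₁ ^ 2 + x₀ ^ 2 - x₁ ^ 2 * x₀ ^ 2 - x₁ * x₀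
    ∀ x₀ x₁ : ℝ, x₁ ^ 2 ≠ 1 → ι x₁ (f x₀ x₁) = ι x₀ x₁ := by
  intro f ι x₀ x₁ h
  have h' : 1 - x₁ ^ 2 ≠ 0 := by intro hc; apply h; linarith
  simp only [f, ι]
  field_simp
  ring
end

section
/- Define g(u₀, u₁) = max(u₀ + 2u₁, u₁, u₀) − max(2u₁, 0) and I(u₀, u₁) = max(2u₁, 2u₀, 2u₁ + 2u₀, u₁ + u₀). Then for all real u₀, u₁: I(u₁, g(u₀, u₁)) = I(u₀, u₁). -/
set_option linter.unnecessarySeqFocus false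
set_option maxHeartbeats 1000000
theorem stmt_19 :
    let g : ℝ → ℝ → ℝ := fun u₀ u₁ => max (u₀ + 2 * u₁) (max u₁ u₀) - max (2 * u₁) 0
    let I : ℝ → ℝ → ℝ := fun u₀ u₁ =>
      max (2 * u₁) (max (2 * u₀) (max (2 * u₁ + 2 * u₀) (u₁ + u₀)))
    ∀ u₀ u₁ : ℝ, I u₁ (g u₀ u₁) = I u₀ u₁ := by
  intro g I u₀ u₁
  simp only [g, I]
  rcases max_cases u₁ u₀ with ⟨h1, h1'⟩ | ⟨h1, h1'⟩ <;> rw [h1] <;>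
  rcases max_cases (u₀ + 2 * u₁) u₁ with ⟨h2, h2'⟩ | ⟨h2, h2'⟩ <;>
  rcases max_cases (u₀ + 2 * u₁) u₀ with ⟨h3, h3'⟩ | ⟨h3, h3'⟩ <;>
  rcases max_cases (2 * u₁) (0:ℝ) with ⟨h4, h4'⟩ | ⟨h4, h4'⟩ <;>
  rcases le_total 0 u₀ with h5 | h5 <;>
  (try rw [h2]) <;> (try rw [h3]) <;> rw [h4] <;>
  (apply le_antisymm <;> simp only [max_le_iff, le_max_iff] <;>
    (first
    | exact Or.inl ⟨by linarith, by linarith, by linarith, by linarith⟩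
    | exact Or.inr (Or.inl ⟨by linarith, by linarith, by linarith, by linarith⟩)
    | exact Or.inr (Or.inr (Or.inl ⟨by linarith, by linarith, by linarith, by linarith⟩))
    | exact Or.inr (Or.inr (Or.inr ⟨by linarith, by linarith, by linarith, by linarith⟩))
    | refine ⟨?_, ?_, ?_, ?_⟩ <;>
        first
        | exact Or.inl (by linarith)
        | exact Or.inr (Or.inl (by linarith))
        | exact Or.inr (Or.inr (Or.inl (by linarith)))
        | exact Or.inr (Or.inr (Or.inr (by linarith)))))
end
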